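/- arXiv:1601.02844 — 4 statements merged into one kernel-verified Lean document; each statement's English description precedes it below -/
import Mathlib

section
/- Let p be a positive integer with p ≤ n, assume E|ε₁| < ∞, and let ψ₁, …, ψ_K : S → ℝ be bounded measurable functions with β_k = ∫_S f·ψ_k dμ for k = 1, …, K. Define the U-statistic Θ̂(p) = binom(n,p)^{−1} Σ_{k=1}^K Σ_{U ⊆ {1,…,n}, |U| = p} ∏_{i ∈ U} Y_i ψ_k(X_i). Then Θ̂(p) is an unbiased estimator of Θ(p) := Σ_{k=1}^K β_k^p, i.e., E[Θ̂(p)] = Σ_{k=1}^K β_k^p. -/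
/-
Each summand `Yᵢ ψ_k(Xᵢ) = (f(Xᵢ) + εᵢ) ψ_k(Xᵢ)` has mean `β_k`: the noise term vanishes because
`εᵢ` is centred and independent of `Xᵢ`. For fixed `k` these summands are independent across `i`,
so the mean of a product over a `p`-subset `U` is `β_k ^ p`, and averaging over the `binom(n,p)`
subsets leaves `β_k ^ p`.
-/

open MeasureTheory ProbabilityTheory Finset

namespace ProbabilityTheory

variable {Ω ι : Type*} [MeasurableSpace Ω] {P : Measure Ω} {g : ι → Ω → ℝ}

theorem iIndepFun.integrable_finsetProd (hg : iIndepFun g P) (hint : ∀ i, Integrable (g i) P)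
    (s : Finset ι) : Integrable (fun ω => ∏ i ∈ s, g i ω) P := by
  classical
  induction s using Finset.induction_on with
  | empty => have := hg.isProbabilityMeasure; simp
  | insert i s hi ih =>
    rw [← prod_fn] at ih ⊢
    rw [prod_insert hi]
    have hindep : IndepFun (g i) (∏ j ∈ s, g j) P :=
      (hg.indepFun_finsetProd_of_notMem₀ (fun j => (hint j).aemeasurable) hi).symm
    exact hindep.integrable_mul (hint i) ih

theorem iIndepFun.integral_finsetProd (hg : iIndepFun g P)
    (hmeas : ∀ i, AEStronglyMeasurable (g i) P) (s : Finset ι) :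
    ∫ ω, ∏ i ∈ s, g i ω ∂P = ∏ i ∈ s, ∫ ω, g i ω ∂P := by
  rw [← prod_coe_sort s (fun i => ∫ ω, g i ω ∂P)]
  simp_rw [← prod_coe_sort s (fun i => g i _)]
  exact (hg.precomp Subtype.val_injective).integral_fun_prod_eq_prod_integral fun i => hmeas i

theorem iIndepFun.integral_sum_powersetCard_prod [Fintype ι] (hg : iIndepFun g P)
    (hint : ∀ i, Integrable (g i) P) {m : ℝ} (hmean : ∀ i, ∫ ω, g i ω ∂P = m) (p : ℕ) :
    ∫ ω, ∑ U ∈ powersetCard p univ, ∏ i ∈ U, g i ω ∂P = (Fintype.card ι).choose p * m ^ p := by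
  rw [integral_finsetSum _ fun U _ => hg.integrable_finsetProd hint U]
  calc ∑ U ∈ powersetCard p univ, ∫ ω, ∏ i ∈ U, g i ω ∂P
      = ∑ U ∈ powersetCard p (univ : Finset ι), m ^ p := by
        refine sum_congr rfl fun U hU => ?_
        rw [hg.integral_finsetProd (fun i => (hint i).aestronglyMeasurable),
          prod_congr rfl fun i _ => hmean i, prod_const, (mem_powersetCard.mp hU).2]
    _ = _ := by rw [sum_const, card_powersetCard, card_univ, nsmul_eq_mul]

end ProbabilityTheory

section Regression

variable {Ω S : Type*} [MeasurableSpace Ω] [MeasurableSpace S] {P : Measure Ω}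
  {X : Ω → S} {ε : Ω → ℝ} {f ψ : S → ℝ} {M C : ℝ}

theorem integrable_comp_of_abs_le [IsFiniteMeasure P] (hX : Measurable X) (hf : Measurable f)
    (hfb : ∀ x, |f x| ≤ M) : Integrable (fun ω => f (X ω)) P :=
  .of_bound (hf.comp hX).aestronglyMeasurable M (.of_forall fun ω => hfb (X ω))

theorem integrable_regression_mul [IsFiniteMeasure P] (hX : Measurable X)
    (hε : Integrable ε P) (hf : Measurable f) (hfb : ∀ x, |f x| ≤ M)
    (hψ : Measurable ψ) (hψb : ∀ x, |ψ x| ≤ C) :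
    Integrable (fun ω => (f (X ω) + ε ω) * ψ (X ω)) P := by
  simp_rw [mul_comm _ (ψ _)]
  exact ((integrable_comp_of_abs_le hX hf hfb).add hε).bdd_mul
    (hψ.comp hX).aestronglyMeasurable (.of_forall fun ω => hψb (X ω))

theorem integral_regression_mul [IsFiniteMeasure P] (hX : Measurable X) (hXε : IndepFun X ε P)
    (hε : Integrable ε P) (hε0 : ∫ ω, ε ω ∂P = 0) (hf : Measurable f) (hfb : ∀ x, |f x| ≤ M)
    (hψ : Measurable ψ) (hψb : ∀ x, |ψ x| ≤ C) :
    ∫ ω, (f (X ω) + ε ω) * ψ (X ω) ∂P = ∫ x, f x * ψ x ∂P.map X := by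
  have hψX : AEStronglyMeasurable (fun ω => ψ (X ω)) P := (hψ.comp hX).aestronglyMeasurable
  have hsignal : Integrable (fun ω => f (X ω) * ψ (X ω)) P :=
    integrable_comp_of_abs_le (f := fun x => f x * ψ x) (M := M * C) hX (hf.mul hψ) fun x => by
      rw [abs_mul]; exact mul_le_mul (hfb x) (hψb x) (abs_nonneg _) ((abs_nonneg _).trans (hfb x))
  have hnoise : Integrable (fun ω => ψ (X ω) * ε ω) P :=
    hε.bdd_mul hψX (.of_forall fun ω => hψb (X ω))
  have hψXε : IndepFun (fun ω => ψ (X ω)) ε P := hXε.comp hψ measurable_id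
  simp_rw [add_mul, mul_comm (ε _)]
  rw [integral_add hsignal hnoise,
    hψXε.integral_fun_mul_eq_mul_integral hψX hε.aestronglyMeasurable, hε0, mul_zero, add_zero,
    integral_map (f := fun x => f x * ψ x) hX.aemeasurable (hf.mul hψ).aestronglyMeasurable]

end Regression

theorem unbiased_U_statistic_general
    {Ω : Type*} [MeasurableSpace Ω] (P : Measure Ω) [IsProbabilityMeasure P]
    {S : Type*} [MeasurableSpace S] (μ : Measure S)
    (n p K : ℕ) (hpn : p ≤ n)
    (X : Fin n → Ω → S) (ε : Fin n → Ω → ℝ)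
    (hXmeas : ∀ i, Measurable (X i))
    -- the pairs (Xᵢ, εᵢ) are mutually independent
    (hindep : iIndepFun (fun i ω => (X i ω, ε i ω)) P)
    -- within each pair, Xᵢ and εᵢ are independent
    (hXε : ∀ i, IndepFun (X i) (ε i) P)
    -- the Xᵢ are identically distributed with law μ
    (hXlaw : ∀ i, Measure.map (X i) P = μ)
    -- the εᵢ are identically distributed, integrable (E|ε₁| < ∞) and centered
    (hεint : ∀ i, Integrable (ε i) P)
    (hεmean : ∀ i, ∫ ω, ε i ω ∂P = 0)
    -- f is bounded measurable
    (M : ℝ) (f : S → ℝ) (hf : Measurable f) (hfb : ∀ x, |f x| ≤ M)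
    -- the ψ_k are bounded measurable
    (ψ : Fin K → S → ℝ) (hψmeas : ∀ k, Measurable (ψ k))
    (C : Fin K → ℝ) (hψb : ∀ k x, |ψ k x| ≤ C k)
    -- the coefficients β_k
    (β : Fin K → ℝ) (hβ : ∀ k, β k = ∫ x, f x * ψ k x ∂μ)
    -- the observations
    (Y : Fin n → Ω → ℝ) (hY : ∀ i ω, Y i ω = f (X i ω) + ε i ω) :
    ∫ ω, ((n.choose p : ℝ))⁻¹ *
        ∑ k, ∑ U ∈ Finset.powersetCard p (Finset.univ : Finset (Fin n)),
          ∏ i ∈ U, Y i ω * ψ k (X i ω) ∂P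
      = ∑ k, β k ^ p := by
  obtain rfl : Y = fun i ω => f (X i ω) + ε i ω := funext fun i => funext (hY i)
  have hsummand_indep : ∀ k, iIndepFun (fun i ω => (f (X i ω) + ε i ω) * ψ k (X i ω)) P := fun k =>
    hindep.comp (fun _ q => (f q.1 + q.2) * ψ k q.1) fun _ => by fun_prop
  have hint : ∀ k i, Integrable (fun ω => (f (X i ω) + ε i ω) * ψ k (X i ω)) P := fun k i =>
    integrable_regression_mul (hXmeas i) (hεint i) hf hfb (hψmeas k) (hψb k)
  have hmean : ∀ k i, ∫ ω, (f (X i ω) + ε i ω) * ψ k (X i ω) ∂P = β k := fun k i => by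
    rw [integral_regression_mul (hXmeas i) (hXε i) (hεint i) (hεmean i) hf hfb (hψmeas k) (hψb k),
      hXlaw i, hβ k]
  have hchoose : (n.choose p : ℝ) ≠ 0 := by exact_mod_cast (Nat.choose_pos hpn).ne'
  rw [integral_const_mul, integral_finsetSum _ fun k _ => integrable_finsetSum _ fun U _ =>
      (hsummand_indep k).integrable_finsetProd (hint k) U, mul_sum]
  refine sum_congr rfl fun k _ => ?_
  rw [(hsummand_indep k).integral_sum_powersetCard_prod (hint k) (hmean k), Fintype.card_fin,
    inv_mul_cancel_left₀ hchoose]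

/-- **Unbiasedness of the global-thresholding U-statistic.**
For a positive integer `p ≤ n`, bounded measurable functions `ψ₁, …, ψ_K` with
coefficients `β_k = ∫ f ψ_k dμ`, the U-statistic
`Θ̂(p) = binom(n,p)⁻¹ ∑ₖ ∑_{U ⊆ {1,…,n}, |U|=p} ∏_{i ∈ U} Yᵢ ψ_k(Xᵢ)`
is an unbiased estimator of `Θ(p) = ∑ₖ β_k ^ p`. -/
theorem unbiased_U_statistic
    {Ω : Type*} [MeasurableSpace Ω] (P : Measure Ω) [IsProbabilityMeasure P]
    {S : Type*} [MeasurableSpace S] (μ : Measure S) [IsProbabilityMeasure μ]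
    (n p K : ℕ) (hp : 0 < p) (hpn : p ≤ n)
    (X : Fin n → Ω → S) (ε : Fin n → Ω → ℝ)
    (hXmeas : ∀ i, Measurable (X i)) (hεmeas : ∀ i, Measurable (ε i))
    -- the pairs (Xᵢ, εᵢ) are mutually independent
    (hindep : iIndepFun (fun i ω => (X i ω, ε i ω)) P)
    -- within each pair, Xᵢ and εᵢ are independent
    (hXε : ∀ i, IndepFun (X i) (ε i) P)
    -- the Xᵢ are identically distributed with law μ
    (hXlaw : ∀ i, Measure.map (X i) P = μ)
    -- the εᵢ are identically distributed, integrable (E|ε₁| < ∞) and centered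
    (hεid : ∀ i j, IdentDistrib (ε i) (ε j) P P)
    (hεint : ∀ i, Integrable (ε i) P)
    (hεmean : ∀ i, ∫ ω, ε i ω ∂P = 0)
    -- f is bounded measurable
    (M : ℝ) (f : S → ℝ) (hf : Measurable f) (hfb : ∀ x, |f x| ≤ M)
    -- the ψ_k are bounded measurable
    (ψ : Fin K → S → ℝ) (hψmeas : ∀ k, Measurable (ψ k))
    (C : Fin K → ℝ) (hψb : ∀ k x, |ψ k x| ≤ C k)
    -- the coefficients β_k
    (β : Fin K → ℝ) (hβ : ∀ k, β k = ∫ x, f x * ψ k x ∂μ)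
    -- the observations
    (Y : Fin n → Ω → ℝ) (hY : ∀ i ω, Y i ω = f (X i ω) + ε i ω) :
    ∫ ω, ((n.choose p : ℝ))⁻¹ *
        ∑ k, ∑ U ∈ Finset.powersetCard p (Finset.univ : Finset (Fin n)),
          ∏ i ∈ U, Y i ω * ψ k (X i ω) ∂P
      = ∑ k, β k ^ p :=
  unbiased_U_statistic_general P μ n p K hpn X ε hXmeas hindep hXε hXlaw hεint hεmean M f hf hfb ψ
    hψmeas C hψb β hβ Y hY
end

section
/- Let n and p be positive integers with p ≤ n, let x₁, …, x_n and β be real numbers. Then Σ_{U ⊆ {1,…,n}, |U| = p} ( ∏_{i ∈ U} x_i − β^p ) = Σ_{h=1}^p binom(n−h, p−h) · β^{p−h} · Σ_{T ⊆ {1,…,n}, |T| = h} ∏_{i ∈ T} (x_i − β). (This is the Hoeffding-type decomposition identity, obtained by reversing the order of summation, used in the proof of Proposition 3.4 to write Θ̂_j(p) − Θ_j(p) as a sum of degenerate U-statistics.) -/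
/-!
Write `xᵢ = (xᵢ - β) + β` and expand each product over a `p`-set `U`: the `h`-subsets `T ⊆ U`
contribute `β ^ (p - h) ∏_{i ∈ T} (xᵢ - β)`, and the `h = 0` term is `β ^ p`. Exchanging the
sums over `U` and `T`, each `h`-set `T` lies in exactly `(n - h).choose (p - h)` of the `p`-sets.
-/

open Finset

namespace Finset

variable {ι R M : Type*}

theorem prod_add_const_eq_pow_add_sum_powersetCard [CommSemiring R] (s : Finset ι)
    (f : ι → R) (c : R) :
    ∏ i ∈ s, (f i + c) =
      c ^ #s + ∑ h ∈ Icc 1 #s, c ^ (#s - h) * ∑ t ∈ powersetCard h s, ∏ i ∈ t, f i := by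
  classical
  have hcard (h : ℕ) :
      ∑ t ∈ powersetCard h s, (∏ i ∈ t, f i) * ∏ _i ∈ s \ t, c =
        c ^ (#s - h) * ∑ t ∈ powersetCard h s, ∏ i ∈ t, f i := by
    rw [mul_sum]
    refine sum_congr rfl fun t ht ↦ ?_
    obtain ⟨hts, rfl⟩ := mem_powersetCard.mp ht
    rw [prod_const, card_sdiff_of_subset hts, mul_comm]
  rw [prod_add, sum_powerset, ← Nat.Ico_zero_eq_range, sum_eq_sum_Ico_succ_bot (Nat.succ_pos _),
    zero_add, Nat.succ_eq_add_one, Ico_add_one_right_eq_Icc]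
  simp only [hcard, powersetCard_zero, sum_singleton, prod_empty, one_mul, sdiff_empty]
  rw [prod_const]

theorem sum_powersetCard_sum_powersetCard [AddCommMonoid M] [DecidableEq ι] (s : Finset ι)
    (f : Finset ι → M) {h p : ℕ} (hhp : h ≤ p) :
    ∑ U ∈ powersetCard p s, ∑ t ∈ powersetCard h U, f t =
      (#s - h).choose (p - h) • ∑ t ∈ powersetCard h s, f t := by
  rw [sum_comm' (t' := powersetCard h s) (s' := fun t ↦ (powersetCard p s).filter (t ⊆ ·))]
  · rw [smul_sum]
    refine sum_congr rfl fun t ht ↦ ?_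
    obtain ⟨hts, rfl⟩ := mem_powersetCard.mp ht
    rw [sum_const, card_filter_powersetCard_subset t s p hts hhp]
  · intro U t
    simp only [mem_powersetCard, mem_filter]
    constructor
    · rintro ⟨⟨hUs, hU⟩, htU, ht⟩
      exact ⟨⟨⟨hUs, hU⟩, htU⟩, htU.trans hUs, ht⟩
    · rintro ⟨⟨⟨hUs, hU⟩, htU⟩, _, ht⟩
      exact ⟨⟨hUs, hU⟩, htU, ht⟩

end Finset

theorem hoeffding_decomposition_general (n p : ℕ)
    (x : Fin n → ℝ) (β : ℝ) :
    ∑ U ∈ Finset.powersetCard p (Finset.univ : Finset (Fin n)),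
        ((∏ i ∈ U, x i) - β ^ p)
      = ∑ h ∈ Finset.Icc 1 p, ((n - h).choose (p - h) : ℝ) * β ^ (p - h) *
          ∑ T ∈ Finset.powersetCard h (Finset.univ : Finset (Fin n)),
            ∏ i ∈ T, (x i - β) := by
  have expand : ∀ U ∈ powersetCard p (univ : Finset (Fin n)), (∏ i ∈ U, x i) - β ^ p =
      ∑ h ∈ Icc 1 p, β ^ (p - h) * ∑ T ∈ powersetCard h U, ∏ i ∈ T, (x i - β) := by
    intro U hU
    obtain ⟨-, rfl⟩ := mem_powersetCard.mp hU
    rw [sub_eq_iff_eq_add', ← prod_add_const_eq_pow_add_sum_powersetCard]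
    simp_rw [sub_add_cancel]
  rw [sum_congr rfl expand, sum_comm]
  refine sum_congr rfl fun h hh ↦ ?_
  rw [← mul_sum, sum_powersetCard_sum_powersetCard _ _ (mem_Icc.mp hh).2, card_univ,
    Fintype.card_fin, nsmul_eq_mul]
  ring

/-- **Hoeffding-type decomposition identity (proof of Proposition 3.4).**
For positive integers `p ≤ n` and reals `x₁, …, x_n`, `β`,
`∑_{U ⊆ {1,…,n}, |U|=p} (∏_{i∈U} xᵢ − β^p)
  = ∑_{h=1}^p binom(n−h, p−h) β^{p−h} ∑_{T ⊆ {1,…,n}, |T|=h} ∏_{i∈T} (xᵢ − β)`. -/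
theorem hoeffding_decomposition (n p : ℕ) (hp : 0 < p) (hpn : p ≤ n)
    (x : Fin n → ℝ) (β : ℝ) :
    ∑ U ∈ Finset.powersetCard p (Finset.univ : Finset (Fin n)),
        ((∏ i ∈ U, x i) - β ^ p)
      = ∑ h ∈ Finset.Icc 1 p, ((n - h).choose (p - h) : ℝ) * β ^ (p - h) *
          ∑ T ∈ Finset.powersetCard h (Finset.univ : Finset (Fin n)),
            ∏ i ∈ T, (x i - β) :=
  hoeffding_decomposition_general n p x β
end

section
/- Let d ≥ 1 be an integer and let σ_d denote the rotation-invariant surface measure on the unit sphere S^d ⊆ ℝ^{d+1}. For every real η > d there exists a constant C = C(η, d) > 0 such that for every ξ ∈ S^d and every real A ≥ 1, ∫_{S^d} (1 + A·‖x − ξ‖)^{−η} dσ_d(x) ≤ C · A^{−d}, where ‖·‖ is the Euclidean norm on ℝ^{d+1}. (This is the basic localization-integral estimate underlying Lemma 2.1 and the needlet L^p-norm bounds.) -/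
/-!
The cone `(0, 1) • C` over a cap `C` of radius `r ≤ 1` around `ξ` is covered by `O(1/r)` balls
of radius `2r` centred on the ray through `ξ`, so the cap has surface measure `O(r^d)`. On the
dyadic shell where `1 + A‖x - ξ‖ ≈ 2^j` the integrand is at most `2^(-jη)` and the shell lies in a
cap of radius `2^(j+1)/A`; summing over `j` gives a geometric series with ratio `2^(d-η) < 1`,
times `A^(-d)`.
-/

open MeasureTheory Metric Set
open scoped ENNReal Pointwise

section Covering

variable {E : Type*} [NormedAddCommGroup E] [NormedSpace ℝ E]

theorem Ioo_smul_closedBall_subset_biUnion {ξ : E} (hξ : ‖ξ‖ = 1) {r : ℝ} (hr : 0 < r) :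
    Ioo (0 : ℝ) 1 • closedBall ξ r ⊆
      ⋃ k ∈ Finset.range (⌊r⁻¹⌋₊ + 1), closedBall (((k : ℝ) * r) • ξ) (2 * r) := by
  rintro _ ⟨t, ⟨ht0, ht1⟩, u, hu, rfl⟩
  rw [mem_closedBall, dist_eq_norm] at hu
  set k := ⌊t / r⌋₊
  have hkt : (k : ℝ) * r ≤ t := (le_div_iff₀ hr).mp (Nat.floor_le (by positivity))
  have htk : t < (k + 1) * r := (div_lt_iff₀ hr).mp (Nat.lt_floor_add_one _)
  have hk : k ∈ Finset.range (⌊r⁻¹⌋₊ + 1) :=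
    Finset.mem_range_succ_iff.mpr <| Nat.floor_le_floor <| by
      rw [div_eq_mul_inv]; exact mul_le_of_le_one_left (inv_pos.2 hr).le ht1.le
  refine mem_biUnion hk ?_
  rw [mem_closedBall, dist_eq_norm,
    show t • u - ((k : ℝ) * r) • ξ = t • (u - ξ) + (t - k * r) • ξ by
      simp only [smul_sub, sub_smul]; abel]
  calc ‖t • (u - ξ) + (t - k * r) • ξ‖ ≤ t * ‖u - ξ‖ + (t - k * r) := by
        refine (norm_add_le _ _).trans_eq ?_
        rw [norm_smul, norm_smul, hξ, Real.norm_of_nonneg ht0.le,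
          Real.norm_of_nonneg (sub_nonneg.2 hkt), mul_one]
    _ ≤ 2 * r := by nlinarith [norm_nonneg (u - ξ)]

end Covering

namespace MeasureTheory.Measure

variable {E : Type*} [NormedAddCommGroup E] [NormedSpace ℝ E] [FiniteDimensional ℝ E]
  [MeasurableSpace E] [BorelSpace E] (μ : Measure E) [μ.IsAddHaarMeasure]

theorem toSphere_closedBall_le_of_le_one {n : ℕ} (hn : Module.finrank ℝ E = n + 1)
    (ξ : sphere (0 : E) 1) {r : ℝ} (hr : 0 < r) (hr1 : r ≤ 1) :
    μ.toSphere (closedBall ξ r) ≤ μ.toSphere univ * ENNReal.ofReal (2 ^ (n + 2) * r ^ n) := by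
  have hξ : ‖(ξ : E)‖ = 1 := by simp
  have hcover : Ioo (0 : ℝ) 1 • ((↑) '' closedBall ξ r : Set E) ⊆
      ⋃ k ∈ Finset.range (⌊r⁻¹⌋₊ + 1), closedBall (((k : ℝ) * r) • (ξ : E)) (2 * r) :=
    (smul_subset_smul_left (image_subset_iff.2 subset_rfl)).trans
      (Ioo_smul_closedBall_subset_biUnion hξ hr)
  have hcount : ((⌊r⁻¹⌋₊ + 1 : ℕ) : ℝ) ≤ 2 * r⁻¹ := by
    have := Nat.floor_le (inv_pos.2 hr).le
    have := one_le_inv₀ hr |>.2 hr1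
    push_cast; linarith
  rw [μ.toSphere_apply' measurableSet_closedBall, μ.toSphere_apply_univ, hn, mul_assoc]
  gcongr
  calc μ (Ioo (0 : ℝ) 1 • ((↑) '' closedBall ξ r))
      ≤ ∑ k ∈ Finset.range (⌊r⁻¹⌋₊ + 1), μ (closedBall (((k : ℝ) * r) • (ξ : E)) (2 * r)) :=
        (measure_mono hcover).trans (measure_biUnion_finset_le _ _)
    _ = ((⌊r⁻¹⌋₊ + 1 : ℕ) : ℝ≥0∞) * ENNReal.ofReal ((2 * r) ^ (n + 1)) * μ (ball 0 1) := by
        simp only [μ.addHaar_closedBall _ (by positivity : (0 : ℝ) ≤ 2 * r), hn,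
          Finset.sum_const, Finset.card_range, nsmul_eq_mul, mul_assoc]
    _ ≤ ENNReal.ofReal (2 * r⁻¹) * ENNReal.ofReal ((2 * r) ^ (n + 1)) * μ (ball 0 1) := by
        gcongr
        rw [← ENNReal.ofReal_natCast]
        exact ENNReal.ofReal_le_ofReal hcount
    _ = μ (ball 0 1) * ENNReal.ofReal (2 ^ (n + 2) * r ^ n) := by
        rw [← ENNReal.ofReal_mul (by positivity), mul_comm]
        congr 2
        field_simp
        ring

theorem toSphere_closedBall_le {n : ℕ} (hn : Module.finrank ℝ E = n + 1)
    (ξ : sphere (0 : E) 1) {r : ℝ} (hr : 0 < r) :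
    μ.toSphere (closedBall ξ r) ≤ μ.toSphere univ * ENNReal.ofReal (2 ^ (n + 2) * r ^ n) := by
  rcases le_or_gt r 1 with hr1 | hr1
  · exact μ.toSphere_closedBall_le_of_le_one hn ξ hr hr1
  · calc μ.toSphere (closedBall ξ r) ≤ μ.toSphere univ * 1 := by
          rw [mul_one]; exact measure_mono (subset_univ _)
      _ ≤ μ.toSphere univ * ENNReal.ofReal (2 ^ (n + 2) * r ^ n) := by
          gcongr
          rw [← ENNReal.ofReal_one]
          exact ENNReal.ofReal_le_ofReal (one_le_mul_of_one_le_of_one_le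
            (one_le_pow₀ one_le_two) (one_le_pow₀ hr1.le))

end MeasureTheory.Measure

section Dyadic

variable {X : Type*} [PseudoMetricSpace X]

theorem dyadic_weight_mul_rpow_eq {A : ℝ} (hA : 0 < A) (s η : ℝ) (j : ℕ) :
    (2 ^ (-η)) ^ j * (2 ^ (j + 1) / A) ^ s = 2 ^ s * A ^ (-s) * (2 ^ (s - η)) ^ j := by
  rw [Real.div_rpow (by positivity) hA.le, ← Real.rpow_pow_comm zero_le_two, pow_succ,
    Real.rpow_neg hA.le, Real.rpow_sub two_pos, Real.rpow_neg zero_le_two]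
  field_simp
  ring

theorem ofReal_rpow_one_add_mul_dist_le_tsum {A η : ℝ} (hA : 0 < A) (hη : 0 ≤ η) (ξ x : X) :
    ENNReal.ofReal ((1 + A * dist x ξ) ^ (-η)) ≤
      ∑' j : ℕ, (closedBall ξ (2 ^ (j + 1) / A)).indicator
        (fun _ ↦ ENNReal.ofReal ((2 ^ (-η)) ^ j)) x := by
  have h1 : 1 ≤ 1 + A * dist x ξ := le_add_of_nonneg_right (by positivity)
  obtain ⟨j, hj_le, hj_lt⟩ := exists_nat_pow_near h1 one_lt_two
  have hx : x ∈ closedBall ξ (2 ^ (j + 1) / A) := by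
    rw [mem_closedBall, le_div_iff₀ hA]
    linarith
  refine le_trans ?_ (ENNReal.le_tsum j)
  rw [indicator_of_mem hx, Real.rpow_pow_comm zero_le_two]
  exact ENNReal.ofReal_le_ofReal (Real.rpow_le_rpow_of_nonpos (by positivity) hj_le (by linarith))

variable [MeasurableSpace X] [OpensMeasurableSpace X]

theorem lintegral_rpow_one_add_mul_dist_le {σ : Measure X} {ξ : X} {M : ℝ≥0∞} {s η : ℝ}
    (hs : 0 ≤ s) (hsη : s < η)
    (hcap : ∀ r > 0, σ (closedBall ξ r) ≤ M * ENNReal.ofReal (r ^ s)) {A : ℝ} (hA : 0 < A) :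
    ∫⁻ x, ENNReal.ofReal ((1 + A * dist x ξ) ^ (-η)) ∂σ ≤
      M * ENNReal.ofReal (2 ^ s / (1 - 2 ^ (s - η)) * A ^ (-s)) := by
  set q : ℝ := 2 ^ (s - η)
  have hq0 : 0 ≤ q := by positivity
  have hq1 : q < 1 := Real.rpow_lt_one_of_one_lt_of_neg one_lt_two (by linarith)
  have hgeom : ∑' j : ℕ, ENNReal.ofReal (q ^ j) = ENNReal.ofReal (1 - q)⁻¹ := by
    rw [← ENNReal.ofReal_tsum_of_nonneg (fun _ ↦ by positivity)
      (summable_geometric_of_lt_one hq0 hq1), tsum_geometric_of_lt_one hq0 hq1]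
  calc ∫⁻ x, ENNReal.ofReal ((1 + A * dist x ξ) ^ (-η)) ∂σ
      ≤ ∫⁻ x, ∑' j : ℕ, (closedBall ξ (2 ^ (j + 1) / A)).indicator
          (fun _ ↦ ENNReal.ofReal ((2 ^ (-η)) ^ j)) x ∂σ :=
        lintegral_mono fun x ↦ ofReal_rpow_one_add_mul_dist_le_tsum hA (by linarith) ξ x
    _ = ∑' j : ℕ, ENNReal.ofReal ((2 ^ (-η)) ^ j) * σ (closedBall ξ (2 ^ (j + 1) / A)) := by
        rw [lintegral_tsum fun j ↦
          (measurable_const.indicator measurableSet_closedBall).aemeasurable]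
        exact tsum_congr fun j ↦ lintegral_indicator_const measurableSet_closedBall _
    _ ≤ ∑' j : ℕ, ENNReal.ofReal ((2 ^ (-η)) ^ j) *
          (M * ENNReal.ofReal ((2 ^ (j + 1) / A) ^ s)) := by
        gcongr with j
        exact hcap _ (by positivity)
    _ = ∑' j : ℕ, M * ENNReal.ofReal (2 ^ s * A ^ (-s)) * ENNReal.ofReal (q ^ j) := by
        refine tsum_congr fun j ↦ ?_
        rw [mul_left_comm, ← ENNReal.ofReal_mul (by positivity), dyadic_weight_mul_rpow_eq hA,
          ENNReal.ofReal_mul (by positivity), mul_assoc]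
    _ = M * ENNReal.ofReal (2 ^ s / (1 - 2 ^ (s - η)) * A ^ (-s)) := by
        rw [ENNReal.tsum_mul_left, hgeom, mul_assoc, ← ENNReal.ofReal_mul (by positivity)]
        congr 2
        ring

end Dyadic

theorem sphere_localization_integral_bound_general (d : ℕ) (η : ℝ) (hη : (d : ℝ) < η) :
    ∃ C > (0 : ℝ),
      ∀ (ξ : sphere (0 : EuclideanSpace ℝ (Fin (d + 1))) 1) (A : ℝ), 1 ≤ A →
        ∫ x : sphere (0 : EuclideanSpace ℝ (Fin (d + 1))) 1,
            (1 + A * ‖(x : EuclideanSpace ℝ (Fin (d + 1)))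
                - (ξ : EuclideanSpace ℝ (Fin (d + 1)))‖) ^ (-η)
            ∂((volume : Measure (EuclideanSpace ℝ (Fin (d + 1)))).toSphere)
          ≤ C * A ^ (-(d : ℝ)) := by
  set σ := (volume : Measure (EuclideanSpace ℝ (Fin (d + 1)))).toSphere
  set M := σ univ * ENNReal.ofReal (2 ^ (d + 2))
  set K : ℝ := 2 ^ (d : ℝ) / (1 - 2 ^ ((d : ℝ) - η))
  have hM_top : M ≠ ⊤ := ENNReal.mul_ne_top (measure_ne_top _ _) ENNReal.ofReal_ne_top
  have hM : 0 < M.toReal := ENNReal.toReal_pos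
    (mul_ne_zero (Measure.measure_univ_ne_zero.2 (Measure.toSphere_ne_zero _)) (by positivity))
    hM_top
  have hK : 0 < K := div_pos (by positivity)
    (sub_pos.2 (Real.rpow_lt_one_of_one_lt_of_neg one_lt_two (by linarith)))
  refine ⟨M.toReal * K, by positivity, fun ξ A hA ↦ ?_⟩
  have hcap (r : ℝ) (hr : 0 < r) : σ (closedBall ξ r) ≤ M * ENNReal.ofReal (r ^ (d : ℝ)) := by
    rw [mul_assoc, ← ENNReal.ofReal_mul (by positivity), Real.rpow_natCast]
    exact Measure.toSphere_closedBall_le _ finrank_euclideanSpace_fin ξ hr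
  have hlint := lintegral_rpow_one_add_mul_dist_le d.cast_nonneg hη hcap (one_pos.trans_le hA)
  simp only [Subtype.dist_eq, dist_eq_norm] at hlint
  rw [integral_eq_lintegral_of_nonneg_ae (ae_of_all _ fun x ↦ by positivity)
    ((Continuous.rpow_const (by fun_prop) fun x ↦ .inl (by positivity)).aestronglyMeasurable)]
  calc _ ≤ (M * ENNReal.ofReal (K * A ^ (-(d : ℝ)))).toReal :=
        ENNReal.toReal_mono (ENNReal.mul_ne_top hM_top ENNReal.ofReal_ne_top) hlint
    _ = M.toReal * K * A ^ (-(d : ℝ)) := by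
        rw [ENNReal.toReal_mul, ENNReal.toReal_ofReal (by positivity), mul_assoc]

/-- **Basic localization-integral estimate on the sphere (underlying Lemma 2.1).**
For the surface measure `σ_d` on the unit sphere `S^d ⊆ ℝ^{d+1}` and every `η > d`,
there is `C = C(η, d) > 0` such that for all `ξ ∈ S^d` and all `A ≥ 1`,
`∫_{S^d} (1 + A‖x − ξ‖)^{−η} dσ_d(x) ≤ C A^{−d}`. -/
theorem sphere_localization_integral_bound (d : ℕ) (hd : 1 ≤ d) (η : ℝ) (hη : (d : ℝ) < η) :
    ∃ C > (0 : ℝ),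
      ∀ (ξ : sphere (0 : EuclideanSpace ℝ (Fin (d + 1))) 1) (A : ℝ), 1 ≤ A →
        ∫ x : sphere (0 : EuclideanSpace ℝ (Fin (d + 1))) 1,
            (1 + A * ‖(x : EuclideanSpace ℝ (Fin (d + 1)))
                - (ξ : EuclideanSpace ℝ (Fin (d + 1)))‖) ^ (-η)
            ∂((volume : Measure (EuclideanSpace ℝ (Fin (d + 1)))).toSphere)
          ≤ C * A ^ (-(d : ℝ)) :=
  sphere_localization_integral_bound_general d η hη
end

section
/- Let d ≥ 1 be an integer and σ_d the rotation-invariant surface measure on the unit sphere S^d ⊆ ℝ^{d+1}. Let η > d and c > 0 be reals, p ∈ [1, ∞) a real, A ≥ 1 a real, and ξ ∈ S^d. If ψ : S^d → ℝ is measurable and satisfies the localization bound |ψ(x)| ≤ c · A^{d/2} (1 + A·‖x − ξ‖)^{−η} for all x ∈ S^d, then there exists a constant C = C(c, p, η, d) > 0 (independent of A and ξ) such that ( ∫_{S^d} |ψ|^p dσ_d )^{1/p} ≤ C · A^{d(1/2 − 1/p)}. (This is the upper bound of Eq. (2.5) of the paper, the L^p-norm bound for quasi-exponentially localized kernels such as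 needlets, derived from the localization property Eq. (2.4).) -/
/-!
Raising the localization bound to the power `p` gives
`|ψ|^p ≤ (c A^{d/2})^p (1 + A‖x - ξ‖)^{-ηp}`. On the dyadic shells
`2^j ≤ 1 + A‖x - ξ‖ < 2^{j+1}`, contained in caps of radius `2^{j+1}/A`, the integrand is at most
`2^{-jηp}`; since a cap of radius `ρ` has measure `O(ρ^d)`, the integral is dominated by a
geometric series with ratio `2^{d-ηp} < 1` times `A^{-d}`.

The cap estimate comes from `σ_d(S) = (d+1) vol(cone over S)`: the cone over a cap of radius `ρ`
lies in the `ρ`-neighbourhood of a unit segment, which is covered by `⌊1/ρ⌋ + 1` balls of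
radius `2ρ`.
-/

open MeasureTheory Metric Set
open scoped Pointwise

section NormedSpace

variable {E : Type*} [NormedAddCommGroup E] [NormedSpace ℝ E]

lemma thickening_segment_zero_subset_iUnion_ball {v : E} (hv : ‖v‖ ≤ 1) {ρ : ℝ} (hρ : 0 < ρ) :
    thickening ρ (segment ℝ 0 v) ⊆
      ⋃ k ∈ Finset.range (⌊1 / ρ⌋₊ + 1), ball (((k : ℝ) * ρ) • v) (2 * ρ) := by
  intro y hy
  rw [segment_eq_image] at hy
  obtain ⟨_, ⟨t, ⟨ht0, ht1⟩, rfl⟩, hyt⟩ := mem_thickening_iff.1 hy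
  simp only [smul_zero, zero_add] at hyt
  set k := ⌊t / ρ⌋₊
  have hk : (k : ℝ) * ρ ≤ t := (le_div_iff₀ hρ).1 (Nat.floor_le (by positivity))
  have hk' : t < (k + 1) * ρ := (div_lt_iff₀ hρ).1 (Nat.lt_floor_add_one _)
  refine mem_biUnion (x := k) (Finset.mem_range.2 (Nat.lt_succ_of_le ?_)) ?_
  · exact Nat.floor_le_floor (div_le_div_of_nonneg_right ht1 hρ.le)
  have hseg : dist (t • v) (((k : ℝ) * ρ) • v) ≤ ρ := by
    rw [dist_eq_norm, ← sub_smul, norm_smul, Real.norm_of_nonneg (by linarith)]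
    nlinarith [norm_nonneg v]
  rw [mem_ball]
  linarith [dist_triangle y (t • v) (((k : ℝ) * ρ) • v)]

lemma Ioo_smul_ball_subset_thickening_segment (ξ : sphere (0 : E) 1) {ρ : ℝ} :
    Ioo (0 : ℝ) 1 • ((↑) '' ball ξ ρ : Set E) ⊆ thickening (min ρ 1) (segment ℝ 0 (ξ : E)) := by
  rintro _ ⟨t, ⟨ht0, ht1⟩, _, ⟨x, hx, rfl⟩, rfl⟩
  have hx1 : ‖(x : E)‖ = 1 := by simp
  rw [mem_thickening_iff]
  rcases le_total ρ 1 with hρ1 | hρ1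
  · refine ⟨t • (ξ : E), ⟨1 - t, t, by linarith, ht0.le, by ring, by simp⟩, ?_⟩
    rw [min_eq_left hρ1, dist_smul₀, Real.norm_of_nonneg ht0.le, ← Subtype.dist_eq]
    nlinarith [mem_ball.1 hx, dist_nonneg (x := x) (y := ξ)]
  · refine ⟨0, left_mem_segment ℝ _ _, ?_⟩
    rwa [min_eq_right hρ1, dist_zero_right, norm_smul, hx1, mul_one, Real.norm_of_nonneg ht0.le]

variable [MeasurableSpace E] [BorelSpace E] [FiniteDimensional ℝ E] (μ : Measure E)
  [μ.IsAddHaarMeasure]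

lemma addHaar_thickening_segment_zero_le {n : ℕ} (hE : Module.finrank ℝ E = n + 1) {v : E}
    (hv : ‖v‖ ≤ 1) {ρ : ℝ} (hρ : 0 < ρ) (hρ1 : ρ ≤ 1) :
    μ (thickening ρ (segment ℝ 0 v)) ≤ ENNReal.ofReal (2 ^ (n + 2) * ρ ^ n) * μ (ball 0 1) := by
  have : Nontrivial E := Module.nontrivial_of_finrank_eq_succ hE
  set N := ⌊1 / ρ⌋₊
  have hN : ((N : ℝ) + 1) * ρ ≤ 2 := by
    have : (N : ℝ) * ρ ≤ 1 := (le_div_iff₀ hρ).1 (Nat.floor_le (by positivity))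
    linarith
  calc μ (thickening ρ (segment ℝ 0 v))
      ≤ ∑ k ∈ Finset.range (N + 1), μ (ball (((k : ℝ) * ρ) • v) (2 * ρ)) :=
        (measure_mono (thickening_segment_zero_subset_iUnion_ball hv hρ)).trans
          (measure_biUnion_finset_le _ _)
    _ = ENNReal.ofReal ((N + 1) * (2 * ρ) ^ (n + 1)) * μ (ball 0 1) := by
        simp only [μ.addHaar_ball _ (by positivity : (0 : ℝ) ≤ 2 * ρ), hE, Finset.sum_const,
          Finset.card_range, nsmul_eq_mul, ← mul_assoc]
        rw [ENNReal.ofReal_mul (by positivity)]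
        norm_cast
    _ ≤ ENNReal.ofReal (2 ^ (n + 2) * ρ ^ n) * μ (ball 0 1) := by
        gcongr ENNReal.ofReal ?_ * _
        calc ((N : ℝ) + 1) * (2 * ρ) ^ (n + 1) = 2 ^ (n + 1) * ρ ^ n * ((N + 1) * ρ) := by ring
          _ ≤ 2 ^ (n + 1) * ρ ^ n * 2 := by gcongr
          _ = 2 ^ (n + 2) * ρ ^ n := by ring

lemma toSphere_ball_le {n : ℕ} (hE : Module.finrank ℝ E = n + 1) (ξ : sphere (0 : E) 1) {ρ : ℝ}
    (hρ : 0 < ρ) :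
    μ.toSphere (ball ξ ρ) ≤ ENNReal.ofReal ((n + 1) * 2 ^ (n + 2) * μ.real (ball 0 1) * ρ ^ n) := by
  have hmin : 0 < min ρ 1 := lt_min hρ one_pos
  rw [μ.toSphere_apply' isOpen_ball.measurableSet, hE]
  calc ((n + 1 : ℕ) : ENNReal) * μ (Ioo (0 : ℝ) 1 • ((↑) '' ball ξ ρ : Set E))
      ≤ ENNReal.ofReal (n + 1) *
          (ENNReal.ofReal (2 ^ (n + 2) * min ρ 1 ^ n) * ENNReal.ofReal (μ.real (ball 0 1))) := by
        rw [ofReal_measureReal measure_ball_lt_top.ne]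
        push_cast
        gcongr
        · norm_cast
        · exact (measure_mono (Ioo_smul_ball_subset_thickening_segment ξ)).trans
            (addHaar_thickening_segment_zero_le μ hE (by simp) hmin (min_le_right _ _))
    _ ≤ ENNReal.ofReal ((n + 1) * 2 ^ (n + 2) * μ.real (ball 0 1) * ρ ^ n) := by
        rw [← ENNReal.ofReal_mul (by positivity), ← ENNReal.ofReal_mul (by positivity)]
        gcongr ENNReal.ofReal ?_
        calc ((n : ℝ) + 1) * (2 ^ (n + 2) * min ρ 1 ^ n * μ.real (ball 0 1))
            = (n + 1) * 2 ^ (n + 2) * μ.real (ball 0 1) * min ρ 1 ^ n := by ring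
          _ ≤ (n + 1) * 2 ^ (n + 2) * μ.real (ball 0 1) * ρ ^ n := by
            gcongr
            exact min_le_left _ _

end NormedSpace

section MetricSpace

variable {X : Type*} [PseudoMetricSpace X]

lemma ofReal_one_add_mul_dist_rpow_neg_le_tsum {A s : ℝ} (hA : 0 < A) (hs : 0 ≤ s) (ξ x : X) :
    ENNReal.ofReal ((1 + A * dist x ξ) ^ (-s)) ≤
      ∑' j : ℕ, (ball ξ (2 ^ (j + 1) / A)).indicator
        (fun _ ↦ ENNReal.ofReal ((2 ^ j : ℝ) ^ (-s))) x := by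
  obtain ⟨j, hj, hj'⟩ := exists_nat_pow_near (x := (1 + A * dist x ξ : ℝ))
    (le_add_of_nonneg_right (by positivity)) one_lt_two
  have hx : x ∈ ball ξ (2 ^ (j + 1) / A) := by
    rw [mem_ball, lt_div_iff₀ hA]
    linarith
  calc ENNReal.ofReal ((1 + A * dist x ξ) ^ (-s))
      ≤ ENNReal.ofReal ((2 ^ j : ℝ) ^ (-s)) :=
        ENNReal.ofReal_le_ofReal (Real.rpow_le_rpow_of_nonpos (by positivity) hj (by linarith))
    _ = (ball ξ (2 ^ (j + 1) / A)).indicator (fun _ ↦ ENNReal.ofReal ((2 ^ j : ℝ) ^ (-s))) x :=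
        (indicator_of_mem hx (fun _ ↦ _)).symm
    _ ≤ _ := ENNReal.le_tsum j

variable [MeasurableSpace X] [OpensMeasurableSpace X]

lemma lintegral_one_add_mul_dist_rpow_neg_le {ν : Measure X} {ξ : X} {n : ℕ} {B A s : ℝ}
    (hB : 0 ≤ B) (hA : 0 < A) (hs : n < s)
    (hν : ∀ r > 0, ν (ball ξ r) ≤ ENNReal.ofReal (B * r ^ n)) :
    ∫⁻ x, ENNReal.ofReal ((1 + A * dist x ξ) ^ (-s)) ∂ν ≤
      ENNReal.ofReal (B * 2 ^ n * (1 - 2 ^ ((n : ℝ) - s))⁻¹ / A ^ n) := by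
  set w : ℝ := 2 ^ ((n : ℝ) - s)
  have hw0 : 0 ≤ w := by positivity
  have hw1 : w < 1 := Real.rpow_lt_one_of_one_lt_of_neg one_lt_two (by linarith)
  have hterm : ∀ j : ℕ, (2 ^ j : ℝ) ^ (-s) * (B * (2 ^ (j + 1) / A) ^ n) =
      B * 2 ^ n / A ^ n * w ^ j := by
    have hw : w = 2 ^ n * (2 : ℝ) ^ (-s) := by
      rw [← Real.rpow_natCast, ← Real.rpow_add two_pos, ← sub_eq_add_neg]
    intro j
    rw [hw, ← Real.rpow_natCast_mul zero_le_two, mul_comm (j : ℝ),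
      Real.rpow_mul_natCast zero_le_two]
    ring
  calc ∫⁻ x, ENNReal.ofReal ((1 + A * dist x ξ) ^ (-s)) ∂ν
      ≤ ∫⁻ x, ∑' j : ℕ, (ball ξ (2 ^ (j + 1) / A)).indicator
          (fun _ ↦ ENNReal.ofReal ((2 ^ j : ℝ) ^ (-s))) x ∂ν :=
        lintegral_mono fun x ↦ ofReal_one_add_mul_dist_rpow_neg_le_tsum hA
          ((Nat.cast_nonneg n).trans hs.le) ξ x
    _ = ∑' j : ℕ, ENNReal.ofReal ((2 ^ j : ℝ) ^ (-s)) * ν (ball ξ (2 ^ (j + 1) / A)) := by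
        rw [lintegral_tsum fun j ↦ (measurable_const.indicator measurableSet_ball).aemeasurable]
        simp only [lintegral_indicator_const measurableSet_ball]
    _ ≤ ∑' j : ℕ, ENNReal.ofReal (B * 2 ^ n / A ^ n * w ^ j) := by
        gcongr with j
        rw [← hterm, ENNReal.ofReal_mul (by positivity)]
        gcongr
        exact hν _ (by positivity)
    _ = ENNReal.ofReal (B * 2 ^ n * (1 - w)⁻¹ / A ^ n) := by
        rw [← ENNReal.ofReal_tsum_of_nonneg (fun j ↦ by positivity)
          ((summable_geometric_of_lt_one hw0 hw1).mul_left _), tsum_mul_left,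
          tsum_geometric_of_lt_one hw0 hw1]
        ring_nf

lemma integral_abs_rpow_le_of_abs_le_one_add_mul_dist_rpow_neg {ν : Measure X} {ξ : X} {n : ℕ}
    {B A a η p : ℝ} (hB : 0 ≤ B) (hA : 0 < A) (ha : 0 ≤ a) (hp : 0 < p) (hηp : n < η * p)
    (hν : ∀ r > 0, ν (ball ξ r) ≤ ENNReal.ofReal (B * r ^ n)) {ψ : X → ℝ} (hψ : Measurable ψ)
    (hψ_le : ∀ x, |ψ x| ≤ a * (1 + A * dist x ξ) ^ (-η)) :
    ∫ x, |ψ x| ^ p ∂ν ≤ a ^ p * (B * 2 ^ n * (1 - 2 ^ ((n : ℝ) - η * p))⁻¹ / A ^ n) := by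
  have hpt : ∀ x, |ψ x| ^ p ≤ a ^ p * (1 + A * dist x ξ) ^ (-(η * p)) := fun x ↦ by
    have h1 : 0 ≤ 1 + A * dist x ξ := by positivity
    calc |ψ x| ^ p ≤ (a * (1 + A * dist x ξ) ^ (-η)) ^ p := by gcongr; exact hψ_le x
      _ = a ^ p * (1 + A * dist x ξ) ^ (-(η * p)) := by
        rw [Real.mul_rpow ha (by positivity), ← Real.rpow_mul h1, neg_mul]
  rw [integral_eq_lintegral_of_nonneg_ae (.of_forall fun x ↦ by positivity)
    (hψ.abs.pow_const p).aestronglyMeasurable]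
  have hw : (2 : ℝ) ^ ((n : ℝ) - η * p) < 1 :=
    Real.rpow_lt_one_of_one_lt_of_neg one_lt_two (by linarith)
  have hK : 0 ≤ B * 2 ^ n * (1 - 2 ^ ((n : ℝ) - η * p))⁻¹ / A ^ n := by
    have := inv_nonneg.2 (sub_nonneg.2 hw.le)
    positivity
  refine ENNReal.toReal_le_of_le_ofReal (by positivity) ?_
  calc ∫⁻ x, ENNReal.ofReal (|ψ x| ^ p) ∂ν
      ≤ ∫⁻ x, ENNReal.ofReal (a ^ p) * ENNReal.ofReal ((1 + A * dist x ξ) ^ (-(η * p))) ∂ν :=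
        lintegral_mono fun x ↦ by
          rw [← ENNReal.ofReal_mul (by positivity)]
          exact ENNReal.ofReal_le_ofReal (hpt x)
    _ ≤ ENNReal.ofReal (a ^ p) *
          ENNReal.ofReal (B * 2 ^ n * (1 - 2 ^ ((n : ℝ) - η * p))⁻¹ / A ^ n) := by
        rw [lintegral_const_mul' _ _ ENNReal.ofReal_ne_top]
        gcongr
        exact lintegral_one_add_mul_dist_rpow_neg_le hB hA hηp hν
    _ = _ := (ENNReal.ofReal_mul (by positivity)).symm

end MetricSpace

lemma mul_rpow_half_mul_div_pow_rpow_one_div {c K A p : ℝ} (d : ℕ) (hc : 0 ≤ c) (hK : 0 ≤ K)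
    (hA : 0 < A) (hp : 0 < p) :
    ((c * A ^ ((d : ℝ) / 2)) ^ p * (K / A ^ d)) ^ (1 / p) =
      c * K ^ (1 / p) * A ^ ((d : ℝ) * (1 / 2 - 1 / p)) := by
  have hpow : (c * A ^ ((d : ℝ) / 2)) ^ p * (K / A ^ d) =
      (c * K ^ (1 / p) * A ^ ((d : ℝ) * (1 / 2 - 1 / p))) ^ p := by
    rw [Real.mul_rpow (x := c * K ^ (1 / p)) (by positivity) (by positivity),
      Real.mul_rpow hc (by positivity), Real.mul_rpow hc (by positivity),
      ← Real.rpow_mul hK, one_div_mul_cancel hp.ne', Real.rpow_one,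
      ← Real.rpow_mul hA.le, ← Real.rpow_mul hA.le, ← Real.rpow_natCast,
      show (d : ℝ) * (1 / 2 - 1 / p) * p = d / 2 * p - d by field_simp,
      Real.rpow_sub hA]
    ring
  rw [hpow, one_div, Real.rpow_rpow_inv (by positivity) hp.ne']

theorem Lp_norm_bound_localized_kernel_general
    (d : ℕ) (η c p : ℝ) (hη : (d : ℝ) < η) (hc : 0 < c) (hp : 1 ≤ p) :
    ∃ C > (0 : ℝ),
      ∀ (A : ℝ), 1 ≤ A →
      ∀ (ξ : sphere (0 : EuclideanSpace ℝ (Fin (d + 1))) 1)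
        (ψ : sphere (0 : EuclideanSpace ℝ (Fin (d + 1))) 1 → ℝ),
        Measurable ψ →
        (∀ x : sphere (0 : EuclideanSpace ℝ (Fin (d + 1))) 1,
          |ψ x| ≤ c * A ^ ((d : ℝ) / 2) *
            (1 + A * ‖(x : EuclideanSpace ℝ (Fin (d + 1)))
                - (ξ : EuclideanSpace ℝ (Fin (d + 1)))‖) ^ (-η)) →
        (∫ x, |ψ x| ^ p
            ∂((volume : Measure (EuclideanSpace ℝ (Fin (d + 1)))).toSphere)) ^ (1 / p)
          ≤ C * A ^ ((d : ℝ) * (1 / 2 - 1 / p)) := by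
  have hp0 : 0 < p := by linarith
  have hηp : (d : ℝ) < η * p := by nlinarith [(Nat.cast_nonneg d : (0 : ℝ) ≤ d)]
  set B := (d + 1) * 2 ^ (d + 2) * volume.real (ball (0 : EuclideanSpace ℝ (Fin (d + 1))) 1)
  set K := B * 2 ^ d * (1 - 2 ^ ((d : ℝ) - η * p))⁻¹
  have hB : 0 < B := by
    have : 0 < volume.real (ball (0 : EuclideanSpace ℝ (Fin (d + 1))) 1) :=
      ENNReal.toReal_pos (measure_ball_pos _ _ one_pos).ne' measure_ball_lt_top.ne
    positivity
  have hK : 0 < K := by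
    have : (2 : ℝ) ^ ((d : ℝ) - η * p) < 1 :=
      Real.rpow_lt_one_of_one_lt_of_neg one_lt_two (by linarith)
    have := inv_pos.2 (sub_pos.2 this)
    positivity
  refine ⟨c * K ^ (1 / p), by positivity, fun A hA ξ ψ hψ hψ_le ↦ ?_⟩
  have hA0 : 0 < A := by linarith
  have hint := integral_abs_rpow_le_of_abs_le_one_add_mul_dist_rpow_neg hB.le hA0
    (by positivity : 0 ≤ c * A ^ ((d : ℝ) / 2)) hp0 hηp
    (fun r hr ↦ toSphere_ball_le volume finrank_euclideanSpace_fin ξ hr) hψ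
    (fun x ↦ by simpa only [Subtype.dist_eq, dist_eq_norm] using hψ_le x)
  calc (∫ x, |ψ x| ^ p ∂(volume : Measure (EuclideanSpace ℝ (Fin (d + 1)))).toSphere) ^ (1 / p)
      ≤ ((c * A ^ ((d : ℝ) / 2)) ^ p * (K / A ^ d)) ^ (1 / p) := by gcongr
    _ = c * K ^ (1 / p) * A ^ ((d : ℝ) * (1 / 2 - 1 / p)) :=
        mul_rpow_half_mul_div_pow_rpow_one_div d hc.le hK.le hA0 hp0

/-- **L^p-norm bound for localized kernels (Eq. (2.5) of the paper).**
If `ψ : S^d → ℝ` satisfies the localization bound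
`|ψ(x)| ≤ c A^{d/2} (1 + A‖x − ξ‖)^{−η}` with `η > d`, then
`(∫_{S^d} |ψ|^p dσ_d)^{1/p} ≤ C A^{d(1/2 − 1/p)}` for a constant
`C = C(c, p, η, d) > 0` independent of `A` and `ξ`. -/
theorem Lp_norm_bound_localized_kernel
    (d : ℕ) (hd : 1 ≤ d) (η c p : ℝ) (hη : (d : ℝ) < η) (hc : 0 < c) (hp : 1 ≤ p) :
    ∃ C > (0 : ℝ),
      ∀ (A : ℝ), 1 ≤ A →
      ∀ (ξ : sphere (0 : EuclideanSpace ℝ (Fin (d + 1))) 1)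
        (ψ : sphere (0 : EuclideanSpace ℝ (Fin (d + 1))) 1 → ℝ),
        Measurable ψ →
        (∀ x : sphere (0 : EuclideanSpace ℝ (Fin (d + 1))) 1,
          |ψ x| ≤ c * A ^ ((d : ℝ) / 2) *
            (1 + A * ‖(x : EuclideanSpace ℝ (Fin (d + 1)))
                - (ξ : EuclideanSpace ℝ (Fin (d + 1)))‖) ^ (-η)) →
        (∫ x, |ψ x| ^ p
            ∂((volume : Measure (EuclideanSpace ℝ (Fin (d + 1)))).toSphere)) ^ (1 / p)
          ≤ C * A ^ ((d : ℝ) * (1 / 2 - 1 / p)) :=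
  Lp_norm_bound_localized_kernel_general d η c p hη hc hp
end
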